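/- Let n ≥ 2 and 1 ≤ κ ≤ n−1 be integers, let a, b ≥ 0 be integers, let 0 < k_1 < k_2 < … < k_{n−κ} and 0 < l_1 < … < l_{n−κ−1} be integers, and work in the multivariate polynomial ring R = ℂ[Z, X_1,…,X_n, A_1,…,A_n]. For each integer s ≥ 0 set M_s = ∑_{j=1}^n A_j X_j^s ∈ R, and let Γ ∈ R be the determinant of the (n−κ+1)×(n−κ+1) matrix whose first row is (Z^a, Z^{a+k_1}, …, Z^{a+k_{n−κ}}) and whose remaining rows, indexed by l ∈ {0, l_1, …, l_{n−κ−1}}, are (M_{b+l}, M_{b+l+k_1}, …, M_{b+l+k_{n−κ}}). Then there exist polynomials φ_ω ∈ R, one for each strictly increasing tuple ω = (ω_1 < ω_2 < … < ω_{n−κ}) of indices from {1,…,n}, such that Γ = ∑_ω (∏_{s=1}^{n−κ} (X_{ω_s} − Z)) · (∏_{1 ≤ s < t ≤ n−κ} (X_{ω_t} − X_{ω_s})²) · φ_ω (with the convention that the empty product over s < t equals 1 when n−κ = 1). -/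

import Mathlib

/-!
Fixing the first row `(Z^{a + k_j})_j`, the determinant is an alternating function of the other
rows, which are combinations `∑_r A_r X_r^{b + l_i} u_r` of the vectors `u_r = (X_r^{k_j})_j`.
Expanding multilinearly and grouping the terms by the set of indices used, `Γ` becomes a sum
over increasing `ω` of the minor `det (A_{ω_s} X_{ω_s}^{b + l_i})_{i,s}` times the determinant
with rows `(Z^{k_j})_j, (X_{ω_1}^{k_j})_j, …` (up to `Z^a`). Both are generalized Vandermonde
determinants, and a determinant `det (p_j (v_i))` with polynomial entries is divisible by the
Vandermonde determinant of its nodes `v` (subtract the first row, take `v_i - v_0` out of every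
other row, expand along the first row). So the minor contributes `∏_{s<t} (X_{ω_t} - X_{ω_s})`
and the other determinant `∏_s (X_{ω_s} - Z) ∏_{s<t} (X_{ω_t} - X_{ω_s})`.
-/

open Finset Matrix MvPolynomial

namespace Matrix

variable {R : Type*} [CommRing R]

theorem det_vandermonde_cons {N : ℕ} (v₀ : R) (v : Fin N → R) :
    (vandermonde (Fin.cons v₀ v : Fin (N + 1) → R)).det =
      (∏ i, (v i - v₀)) * (vandermonde v).det := by
  rw [det_vandermonde, det_vandermonde, Fin.prod_univ_succ]
  simp

theorem det_vandermonde_eq_prod_filter_lt {N : ℕ} (v : Fin N → R) :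
    (vandermonde v).det =
      ∏ p ∈ univ.filter (fun p : Fin N × Fin N => p.1 < p.2), (v p.2 - v p.1) := by
  rw [det_vandermonde, prod_filter, Fintype.prod_prod_type]
  simp [← prod_filter, filter_lt_eq_Ioi]

theorem det_vandermonde_dvd_det_eval : ∀ {N : ℕ} (v : Fin N → R) (p : Fin N → Polynomial R),
    (vandermonde v).det ∣ (of fun i j => (p j).eval (v i)).det
  | 0, v, p => by simp
  | N + 1, v, p => by
    obtain ⟨v₀, v, rfl⟩ : ∃ v₀ u, v = Fin.cons v₀ u :=
      ⟨v 0, Fin.tail v, (Fin.cons_self_tail v).symm⟩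
    choose q hq using fun j => Polynomial.X_sub_C_dvd_sub_C_eval (a := v₀) (p := p j)
    set B : Matrix (Fin (N + 1)) (Fin (N + 1)) R :=
      of (Fin.cons (fun j => (p j).eval v₀) fun i j => (q j).eval (v i))
    have hrow : (of fun i j => (p j).eval ((Fin.cons v₀ v : Fin (N + 1) → R) i)).det =
        (of fun i j => (Fin.cons 1 fun i => v i - v₀ : Fin (N + 1) → R) i * B i j).det := by
      refine det_eq_of_forall_row_eq_smul_add_const (Fin.cons 0 1) 0 rfl fun i j => ?_
      refine Fin.cases (by simp [B]) (fun i => ?_) i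
      have := congrArg (Polynomial.eval (v i)) (hq j)
      simp only [Polynomial.eval_sub, Polynomial.eval_mul, Polynomial.eval_X,
        Polynomial.eval_C] at this
      simp [B, ← this]
    have hB : (vandermonde v).det ∣ B.det := by
      rw [det_succ_row_zero]
      exact dvd_sum fun j _ => dvd_mul_of_dvd_right (det_vandermonde_dvd_det_eval v _) _
    rw [hrow, det_mul_column, det_vandermonde_cons, Fin.prod_univ_succ]
    simpa using mul_dvd_mul_left _ hB

theorem det_vandermonde_dvd_det_pow {N : ℕ} (v : Fin N → R) (e : Fin N → ℕ) :
    (vandermonde v).det ∣ (of fun i j => v i ^ e j).det := by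
  simpa using det_vandermonde_dvd_det_eval v fun j => Polynomial.X ^ e j

end Matrix

open scoped Classical in
theorem Fin.sum_filter_injective_eq_sum_strictMono_sum_perm {M : Type*} [AddCommMonoid M]
    {m n : ℕ} (F : (Fin m → Fin n) → M) :
    ∑ f ∈ univ.filter Function.Injective, F f =
      ∑ ω ∈ univ.filter StrictMono, ∑ σ : Equiv.Perm (Fin m), F (ω ∘ σ) := by
  rw [← sum_product']
  symm
  refine sum_nbij (fun p => p.1 ∘ p.2) ?_ ?_ ?_ (fun _ _ => rfl)
  · simp only [mem_product, mem_filter, mem_univ, true_and, and_true]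
    exact fun p hp => hp.injective.comp p.2.injective
  · rintro ⟨ω, σ⟩ hω ⟨ω', σ'⟩ hω' h
    simp only [coe_product, coe_filter, mem_univ, true_and, Set.mem_prod, Set.mem_ofPred_eq,
      coe_univ, Set.mem_univ, and_true] at hω hω' h
    have hrange : Set.range ω = Set.range ω' := by
      rw [← σ.surjective.range_comp ω, h, σ'.surjective.range_comp]
    obtain rfl := (hω.range_inj hω').mp hrange
    exact Prod.ext rfl (Equiv.ext fun i => hω.injective (congrFun h i))
  · intro f hf
    simp only [coe_filter, mem_univ, true_and, Set.mem_ofPred_eq] at hf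
    refine ⟨(f ∘ Tuple.sort f, (Tuple.sort f)⁻¹), ?_, ?_⟩
    · simpa using (Tuple.monotone_sort f).strictMono_of_injective (hf.comp (Equiv.injective _))
    · ext i
      simp

open scoped Classical in
theorem AlternatingMap.map_sum_smul_eq_sum_det_smul {R M N : Type*} [CommRing R]
    [AddCommGroup M] [Module R M] [AddCommGroup N] [Module R N] {m n : ℕ}
    (F : M [⋀^Fin m]→ₗ[R] N) (W : Matrix (Fin m) (Fin n) R) (u : Fin n → M) :
    F (fun i => ∑ r, W i r • u r) =
      ∑ ω ∈ univ.filter StrictMono, (W.submatrix id ω).det • F (u ∘ ω) := by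
  have hperm (ω : Fin m → Fin n) (σ : Equiv.Perm (Fin m)) :
      (∏ i, W i (ω (σ i))) • F (u ∘ ω ∘ σ) =
        (Equiv.Perm.sign σ * ∏ i, W i (ω (σ i))) • F (u ∘ ω) := by
    rw [← Function.comp_assoc, F.map_perm, Units.smul_def, ← Int.cast_smul_eq_zsmul R,
      smul_smul, mul_comm]
  calc F (fun i => ∑ r, W i r • u r)
      = ∑ f : Fin m → Fin n, (∏ i, W i (f i)) • F (u ∘ f) :=
        (F.toMultilinearMap.map_sum _).trans (sum_congr rfl fun f _ => F.map_smul_univ _ _)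
    _ = ∑ f ∈ univ.filter Function.Injective, (∏ i, W i (f i)) • F (u ∘ f) := by
        refine (sum_filter_of_ne fun f _ hf => ?_).symm
        by_contra hinj
        exact hf (by rw [F.map_eq_zero_of_not_injective _ fun h => hinj h.of_comp, smul_zero])
    _ = ∑ ω ∈ univ.filter StrictMono, (W.submatrix id ω).det • F (u ∘ ω) := by
        rw [Fin.sum_filter_injective_eq_sum_strictMono_sum_perm]
        refine sum_congr rfl fun ω _ => ?_
        rw [← det_transpose, det_apply', sum_smul]
        exact sum_congr rfl fun σ _ => hperm ω σ

open scoped Classical in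
theorem exists_det_cons_moments_eq_sum {R : Type*} [CommRing R] {m n : ℕ} (z : R)
    (x c : Fin n → R) (a b : ℕ) (e : Fin (m + 1) → ℕ) (l : Fin m → ℕ) :
    ∃ φ : (Fin m → Fin n) → R,
      (of (Fin.cons (fun j => z ^ (a + e j)) fun i j => ∑ r, c r * x r ^ (b + l i + e j))).det =
        ∑ ω ∈ univ.filter StrictMono,
          (∏ s, (x (ω s) - z)) * (vandermonde (x ∘ ω)).det ^ 2 * φ ω := by
  set W : Matrix (Fin m) (Fin n) R := of fun i r => c r * x r ^ (b + l i)
  set u : Fin n → Fin (m + 1) → R := fun r j => x r ^ e j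
  set row₀ : Fin (m + 1) → R := fun j => z ^ (a + e j)
  have hexpand : (of (Fin.cons row₀ fun i j => ∑ r, c r * x r ^ (b + l i + e j))).det =
      ∑ ω ∈ univ.filter StrictMono,
        (W.submatrix id ω).det * (of (Fin.cons row₀ (u ∘ ω))).det := by
    have hrows : of (Fin.cons row₀ fun i j => ∑ r, c r * x r ^ (b + l i + e j)) =
        Fin.cons row₀ fun i => ∑ r, W i r • u r := by
      ext i j
      refine Fin.cases rfl (fun i => ?_) i
      simp [W, u, pow_add, mul_assoc]
    rw [hrows]
    exact (detRowAlternating.curryLeft row₀).map_sum_smul_eq_sum_det_smul W u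
  have hW (ω : Fin m → Fin n) : (vandermonde (x ∘ ω)).det ∣ (W.submatrix id ω).det := by
    have : (W.submatrix id ω).det =
        (∏ s, c (ω s) * x (ω s) ^ b) * (of fun s i => x (ω s) ^ l i).det := by
      rw [← det_transpose (of fun s i => _), ← det_mul_row]
      congr 1
      ext i s
      simp [W, pow_add, mul_assoc]
    rw [this]
    exact dvd_mul_of_dvd_right (det_vandermonde_dvd_det_pow _ _) _
  have hN (ω : Fin m → Fin n) : (∏ s, (x (ω s) - z)) * (vandermonde (x ∘ ω)).det ∣
      (of (Fin.cons row₀ (u ∘ ω))).det := by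
    have : (of (Fin.cons row₀ (u ∘ ω))).det =
        (∏ i, (Fin.cons (z ^ a) 1 : Fin (m + 1) → R) i) *
          (of fun i j => (Fin.cons z (x ∘ ω) : Fin (m + 1) → R) i ^ e j).det := by
      rw [← det_mul_column]
      congr 1
      ext i j
      refine Fin.cases ?_ (fun i => ?_) i <;> simp [row₀, u, pow_add]
    have h := det_vandermonde_dvd_det_pow (Fin.cons z (x ∘ ω) : Fin (m + 1) → R) e
    rw [det_vandermonde_cons] at h
    rw [this]
    exact dvd_mul_of_dvd_right h _
  choose φ hφ using fun ω => mul_dvd_mul (hW ω) (hN ω)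
  refine ⟨φ, hexpand.trans (sum_congr rfl fun ω _ => (hφ ω).trans (by ring))⟩

theorem gamma_decomposition_general
    (n κ : ℕ) (a b : ℕ) (k l : ℕ → ℕ) :
    ∃ φ : (Fin (n - κ) → Fin n) → MvPolynomial (Option (Fin n ⊕ Fin n)) ℂ,
      (Matrix.det (Matrix.of fun i j : Fin (n - κ + 1) =>
          if (i : ℕ) = 0 then
            (MvPolynomial.X none : MvPolynomial (Option (Fin n ⊕ Fin n)) ℂ) ^ (a + k (j : ℕ))
          else
            ∑ r : Fin n, MvPolynomial.X (some (Sum.inr r)) *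
              MvPolynomial.X (some (Sum.inl r)) ^ (b + l ((i : ℕ) - 1) + k (j : ℕ)))) =
      ∑ ω ∈ Finset.univ.filter
          (fun ω : Fin (n - κ) → Fin n => ∀ s t : Fin (n - κ), s < t → ω s < ω t),
        (∏ s : Fin (n - κ),
            (MvPolynomial.X (some (Sum.inl (ω s))) - MvPolynomial.X none)) *
        (∏ p ∈ Finset.univ.filter (fun p : Fin (n - κ) × Fin (n - κ) => p.1 < p.2),
            (MvPolynomial.X (some (Sum.inl (ω p.2))) -
              MvPolynomial.X (some (Sum.inl (ω p.1)))) ^ 2) *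
        φ ω := by
  obtain ⟨φ, hφ⟩ := exists_det_cons_moments_eq_sum
    (X none : MvPolynomial (Option (Fin n ⊕ Fin n)) ℂ) (fun r => X (some (Sum.inl r)))
    (fun r => X (some (Sum.inr r))) a b (fun j : Fin (n - κ + 1) => k j)
    (fun i : Fin (n - κ) => l i)
  refine ⟨φ, ?_⟩
  convert hφ using 2
  · ext i j
    refine Fin.cases ?_ (fun i => ?_) i <;> simp
  · ext ω
    simp [StrictMono]
  · simp [det_vandermonde_eq_prod_filter_lt, prod_pow]

/-- Theorem 4.3 (formal version): in the polynomial ring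
`R = ℂ[Z, X_1,…,X_n, A_1,…,A_n]` (variables indexed by `Option (Fin n ⊕ Fin n)`, with
`Z = none`, `X_j = some (inl j)`, `A_j = some (inr j)`), the determinant `Γ` built from the
formal moments `M_s = ∑_j A_j X_j^s` decomposes as a sum over strictly increasing tuples
`ω = (ω_1 < … < ω_{n-κ})` of the products
`(∏_s (X_{ω_s} - Z)) (∏_{s<t} (X_{ω_t} - X_{ω_s})²) φ_ω`. -/
theorem gamma_decomposition
    (n κ : ℕ) (hn : 2 ≤ n) (hκ1 : 1 ≤ κ) (hκ2 : κ ≤ n - 1)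
    (a b : ℕ) (k l : ℕ → ℕ)
    (hk0 : k 0 = 0) (hkmono : ∀ i j, i < j → j ≤ n - κ → k i < k j)
    (hl0 : l 0 = 0) (hlmono : ∀ i j, i < j → j ≤ n - κ - 1 → l i < l j) :
    ∃ φ : (Fin (n - κ) → Fin n) → MvPolynomial (Option (Fin n ⊕ Fin n)) ℂ,
      (Matrix.det (Matrix.of fun i j : Fin (n - κ + 1) =>
          if (i : ℕ) = 0 then
            (MvPolynomial.X none : MvPolynomial (Option (Fin n ⊕ Fin n)) ℂ) ^ (a + k (j : ℕ))
          else
            ∑ r : Fin n, MvPolynomial.X (some (Sum.inr r)) *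
              MvPolynomial.X (some (Sum.inl r)) ^ (b + l ((i : ℕ) - 1) + k (j : ℕ)))) =
      ∑ ω ∈ Finset.univ.filter
          (fun ω : Fin (n - κ) → Fin n => ∀ s t : Fin (n - κ), s < t → ω s < ω t),
        (∏ s : Fin (n - κ),
            (MvPolynomial.X (some (Sum.inl (ω s))) - MvPolynomial.X none)) *
        (∏ p ∈ Finset.univ.filter (fun p : Fin (n - κ) × Fin (n - κ) => p.1 < p.2),
            (MvPolynomial.X (some (Sum.inl (ω p.2))) -
              MvPolynomial.X (some (Sum.inl (ω p.1)))) ^ 2) *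
        φ ω :=
  gamma_decomposition_general n κ a b k l
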